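/- Let b ∈ ℂ^n be a unit vector, W ∈ ℂ^{n×k} a matrix of full column rank, M ∈ ℂ^{n×n} Hermitian positive definite, and suppose the residual r := b − W (W* M W)^{-1} W* M b is nonzero. Let B := [b, W] ∈ ℂ^{n×(k+1)} have full column rank. Then ‖r‖_M = ‖B (B* M B)^{-1} e_1‖_M^{-1}, where e_1 is the first standard basis vector of ℂ^{k+1} and ‖x‖_M = sqrt(x* M x). -/

import Mathlib

open Matrix ComplexOrder

/-!
Put `y = (W* M W)⁻¹ W* M b`, so `r = b - W y`. The residual is M-orthogonal to the columns
of `W`, hence `b* M r = r* M r`, and `r = B c` with `c = (1, -y)`. Therefore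
`B* M B c = (b* M r, W* M r) = ‖r‖_M² e₁`, i.e. `B (B* M B)⁻¹ e₁ = r / ‖r‖_M²`, whose M-norm
is `1 / ‖r‖_M`.
-/

namespace Matrix

theorem conjTranspose_mulVec_mulVec_sub_proj_eq_zero {𝕜 n m : Type*} [Field 𝕜] [StarRing 𝕜]
    [Fintype n] [Fintype m] [DecidableEq m] (M : Matrix n n 𝕜) (W : Matrix n m 𝕜)
    (hW : IsUnit (Wᴴ * M * W).det) (b : n → 𝕜) :
    Wᴴ *ᵥ (M *ᵥ (b - W *ᵥ ((Wᴴ * M * W)⁻¹ *ᵥ (Wᴴ *ᵥ (M *ᵥ b))))) = 0 := by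
  rw [mulVec_sub, mulVec_sub, mulVec_mulVec, mulVec_mulVec, mulVec_mulVec, mulVec_mulVec,
    mulVec_mulVec, mul_nonsing_inv _ hW, Matrix.one_mul, sub_self]

theorem inv_mulVec_eq_inv_smul {K m : Type*} [Field K] [Fintype m] [DecidableEq m]
    {N : Matrix m m K} (hN : IsUnit N.det) {c e : m → K} {ρ : K} (hρ : ρ ≠ 0)
    (h : N *ᵥ c = ρ • e) : N⁻¹ *ᵥ e = ρ⁻¹ • c := by
  rw [← inv_smul_smul₀ hρ e, ← h, mulVec_smul, mulVec_mulVec, nonsing_inv_mul _ hN, one_mulVec]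

section FinCasesCol

variable {R n : Type*} {k : ℕ}

theorem of_finCases_mulVec_cons [CommSemiring R] (b : n → R) (W : Matrix n (Fin k) R)
    (a : R) (y : Fin k → R) :
    (of fun i j => Fin.cases (b i) (W i) j : Matrix n (Fin (k + 1)) R) *ᵥ Fin.cons a y =
      a • b + W *ᵥ y := by
  ext i
  simp [mulVec, dotProduct, Fin.sum_univ_succ, mul_comm]

theorem conjTranspose_of_finCases_mulVec [Fintype n] [Semiring R] [StarRing R] (b : n → R)
    (W : Matrix n (Fin k) R) (v : n → R) :
    (of fun i j => Fin.cases (b i) (W i) j : Matrix n (Fin (k + 1)) R)ᴴ *ᵥ v =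
      Fin.cons (star b ⬝ᵥ v) (Wᴴ *ᵥ v) := by
  ext j
  refine Fin.cases ?_ (fun j => ?_) j <;> simp [mulVec, dotProduct, conjTranspose_apply]

end FinCasesCol

theorem of_finCases_mulVec_inv_gram_mulVec_single_zero {𝕜 n : Type*} [Field 𝕜] [StarRing 𝕜]
    [Fintype n] {k : ℕ} (M : Matrix n n 𝕜) (b : n → 𝕜) (W : Matrix n (Fin k) 𝕜)
    (hW : IsUnit (Wᴴ * M * W).det) (r : n → 𝕜)
    (hr : r = b - W *ᵥ ((Wᴴ * M * W)⁻¹ *ᵥ (Wᴴ *ᵥ (M *ᵥ b))))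
    (hρ : star r ⬝ᵥ M *ᵥ r ≠ 0) (B : Matrix n (Fin (k + 1)) 𝕜)
    (hB : B = of fun i j => Fin.cases (b i) (W i) j) (hBMB : IsUnit (Bᴴ * M * B).det) :
    B *ᵥ ((Bᴴ * M * B)⁻¹ *ᵥ Pi.single 0 1) = (star r ⬝ᵥ M *ᵥ r)⁻¹ • r := by
  set y := (Wᴴ * M * W)⁻¹ *ᵥ (Wᴴ *ᵥ (M *ᵥ b))
  have horth : Wᴴ *ᵥ (M *ᵥ r) = 0 := hr ▸ conjTranspose_mulVec_mulVec_sub_proj_eq_zero M W hW b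
  have hBc : B *ᵥ Fin.cons 1 (-y) = r := by
    rw [hB, of_finCases_mulVec_cons, one_smul, mulVec_neg, ← sub_eq_add_neg, hr]
  have hbr : star b ⬝ᵥ M *ᵥ r = star r ⬝ᵥ M *ᵥ r := by
    rw [show b = r + W *ᵥ y by rw [hr, sub_add_cancel], star_add, add_dotProduct, star_mulVec,
      ← dotProduct_mulVec, horth, dotProduct_zero, add_zero]
  have hgram : (Bᴴ * M * B) *ᵥ Fin.cons 1 (-y) = (star r ⬝ᵥ M *ᵥ r) • Pi.single 0 1 := by
    rw [← mulVec_mulVec, ← mulVec_mulVec, hBc, hB, conjTranspose_of_finCases_mulVec, hbr,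
      horth]
    ext j
    refine Fin.cases ?_ (fun j => ?_) j <;> simp
  rw [inv_mulVec_eq_inv_smul hBMB hρ hgram, mulVec_smul, hBc]

theorem PosDef.sqrt_re_dotProduct_mulVec_self_eq_inv {n : Type*} [Fintype n]
    {M : Matrix n n ℂ} (hM : M.PosDef) {r : n → ℂ} (hr : r ≠ 0) :
    Real.sqrt ((star r ⬝ᵥ M *ᵥ r).re) =
      (Real.sqrt ((star ((star r ⬝ᵥ M *ᵥ r)⁻¹ • r) ⬝ᵥ
        M *ᵥ ((star r ⬝ᵥ M *ᵥ r)⁻¹ • r)).re))⁻¹ := by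
  obtain ⟨hre, him⟩ := Complex.pos_iff.mp (hM.dotProduct_mulVec_pos hr)
  set s := (star r ⬝ᵥ M *ᵥ r).re
  have hρ : star r ⬝ᵥ M *ᵥ r = s := Complex.ext rfl him.symm
  have hquad : star ((s : ℂ)⁻¹ • r) ⬝ᵥ M *ᵥ ((s : ℂ)⁻¹ • r) = (s⁻¹ : ℝ) := by
    rw [star_smul, mulVec_smul, smul_dotProduct, dotProduct_smul, hρ, ← Complex.ofReal_inv,
      Complex.star_def, Complex.conj_ofReal, smul_eq_mul, smul_eq_mul, ← Complex.ofReal_mul,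
      ← Complex.ofReal_mul, inv_mul_cancel₀ hre.ne', mul_one]
  rw [hρ, hquad, Complex.ofReal_re, Real.sqrt_inv, inv_inv]

end Matrix

theorem stmt19_general (n k : ℕ) (b : Fin n → ℂ)
    (W : Matrix (Fin n) (Fin k) ℂ)
    (hWrank : LinearIndependent ℂ (fun j : Fin k => (Wᵀ : Matrix (Fin k) (Fin n) ℂ) j))
    (M : Matrix (Fin n) (Fin n) ℂ) (hM : M.PosDef)
    (r : Fin n → ℂ)
    (hrdef : r = b - W *ᵥ ((Wᴴ * M * W)⁻¹ *ᵥ (Wᴴ *ᵥ (M *ᵥ b))))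
    (hr : r ≠ 0)
    (B : Matrix (Fin n) (Fin (k + 1)) ℂ)
    (hB : B = Matrix.of fun i j => Fin.cases (b i) (fun j' => W i j') j)
    (hBrank : LinearIndependent ℂ (fun j : Fin (k + 1) => (Bᵀ : Matrix (Fin (k + 1)) (Fin n) ℂ) j)) :
    Real.sqrt ((star r ⬝ᵥ M *ᵥ r).re) =
      (Real.sqrt
        ((star (B *ᵥ ((Bᴴ * M * B)⁻¹ *ᵥ Pi.single (0 : Fin (k + 1)) (1 : ℂ))) ⬝ᵥ
          M *ᵥ (B *ᵥ ((Bᴴ * M * B)⁻¹ *ᵥ Pi.single (0 : Fin (k + 1)) (1 : ℂ)))).re))⁻¹ := by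
  have hWMW := hM.conjTranspose_mul_mul_same (mulVec_injective_iff.mpr hWrank)
  have hBMB := hM.conjTranspose_mul_mul_same (mulVec_injective_iff.mpr hBrank)
  rw [of_finCases_mulVec_inv_gram_mulVec_single_zero M b W
    ((isUnit_iff_isUnit_det _).mp hWMW.isUnit) r hrdef (hM.dotProduct_mulVec_pos hr).ne' B hB
    ((isUnit_iff_isUnit_det _).mp hBMB.isUnit)]
  exact hM.sqrt_re_dotProduct_mulVec_self_eq_inv hr

/-- Let `b ∈ ℂⁿ` be a unit vector, `W ∈ ℂ^{n×k}` of full column rank,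
`M` Hermitian positive definite, and suppose the residual
`r = b - W (W* M W)⁻¹ W* M b` is nonzero.  With `B = [b, W] ∈ ℂ^{n×(k+1)}` of full column
rank, one has `‖r‖_M = ‖B (B* M B)⁻¹ e₁‖_M⁻¹`, where `e₁` is the first standard basis
vector of `ℂ^{k+1}` and `‖x‖_M = sqrt (x* M x)`. -/
theorem stmt19 (n k : ℕ) (b : Fin n → ℂ) (hb : ∑ i, ‖b i‖ ^ 2 = 1)
    (W : Matrix (Fin n) (Fin k) ℂ)
    (hWrank : LinearIndependent ℂ (fun j : Fin k => (Wᵀ : Matrix (Fin k) (Fin n) ℂ) j))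
    (M : Matrix (Fin n) (Fin n) ℂ) (hM : M.PosDef)
    (r : Fin n → ℂ)
    (hrdef : r = b - W *ᵥ ((Wᴴ * M * W)⁻¹ *ᵥ (Wᴴ *ᵥ (M *ᵥ b))))
    (hr : r ≠ 0)
    (B : Matrix (Fin n) (Fin (k + 1)) ℂ)
    (hB : B = Matrix.of fun i j => Fin.cases (b i) (fun j' => W i j') j)
    (hBrank : LinearIndependent ℂ (fun j : Fin (k + 1) => (Bᵀ : Matrix (Fin (k + 1)) (Fin n) ℂ) j)) :
    Real.sqrt ((star r ⬝ᵥ M *ᵥ r).re) =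
      (Real.sqrt
        ((star (B *ᵥ ((Bᴴ * M * B)⁻¹ *ᵥ Pi.single (0 : Fin (k + 1)) (1 : ℂ))) ⬝ᵥ
          M *ᵥ (B *ᵥ ((Bᴴ * M * B)⁻¹ *ᵥ Pi.single (0 : Fin (k + 1)) (1 : ℂ)))).re))⁻¹ :=
  stmt19_general n k b W hWrank M hM r hrdef hr B hB hBrank
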